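/- The metric g = μ(dx²+dy²+dxdy) + e^{-y}(2dx+dy)dv + e^{-x}(dx+2dy)du on ℝ⁴ has neutral signature (2,2) at every point, for every real value of μ. -/
import Mathlib


open Real Matrix

noncomputable def gB (μ : ℝ) (p : Fin 4 → ℝ) : Matrix (Fin 4) (Fin 4) ℝ :=
  Matrix.of
    ![![μ, μ/2, exp (-p 0) / 2, exp (-p 1)],
      ![μ/2, μ, exp (-p 0), exp (-p 1) / 2],
      ![exp (-p 0) / 2, exp (-p 0), 0, 0],
      ![exp (-p 1), exp (-p 1) / 2, 0, 0]]

/-- The same matrix with abstract positive entries `a = e^{-x}`, `b = e^{-y}`. -/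
noncomputable def gB' (μ a b : ℝ) : Matrix (Fin 4) (Fin 4) ℝ :=
  Matrix.of
    ![![μ, μ/2, a / 2, b],
      ![μ/2, μ, a, b / 2],
      ![a / 2, a, 0, 0],
      ![b, b / 2, 0, 0]]

/-- First basis vector of the (positive if s = 1, negative if s = -1) plane. -/
noncomputable def bvec (s μ a b : ℝ) : Fin 4 → ℝ :=
  ![-(1:ℝ)/3, 2/3, (s - μ/3)/a, (μ/6)/b]

/-- Second basis vector of the plane. -/
noncomputable def bvec' (s μ a b : ℝ) : Fin 4 → ℝ :=
  ![(2:ℝ)/3, -(1:ℝ)/3, (μ/6)/a, (s - μ/3)/b]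

lemma bvec_li (s μ a b : ℝ) : LinearIndependent ℝ ![bvec s μ a b, bvec' s μ a b] := by
  rw [LinearIndependent.pair_iff]
  intro c d h
  have h0 := congrFun h 0
  have h1 := congrFun h 1
  simp [bvec, bvec'] at h0 h1
  constructor <;> linarith

lemma finrank_span_pair_eq_two {x y : Fin 4 → ℝ} (h : LinearIndependent ℝ ![x, y]) :
    Module.finrank ℝ (Submodule.span ℝ ({x, y} : Set (Fin 4 → ℝ))) = 2 := by
  have hr : ({x, y} : Set (Fin 4 → ℝ)) = Set.range ![x, y] :=
    (Matrix.range_cons_cons_empty x y _).symm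
  rw [hr, finrank_span_eq_card h]
  simp

lemma eval_quad (s μ a b c d : ℝ) (ha : a ≠ 0) (hb : b ≠ 0) :
    (c • bvec s μ a b + d • bvec' s μ a b) ⬝ᵥ
      (gB' μ a b).mulVec (c • bvec s μ a b + d • bvec' s μ a b) = s * (c^2 + d^2) := by
  simp only [gB', bvec, bvec', Matrix.mulVec, dotProduct, Fin.sum_univ_four,
    Pi.add_apply, Pi.smul_apply, smul_eq_mul, Matrix.of_apply,
    Matrix.cons_val', Matrix.cons_val_zero, Matrix.cons_val_one, Matrix.head_cons,
    Matrix.cons_val_fin_one, Matrix.empty_val', Matrix.head_fin_const,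
    Matrix.cons_val_two, Matrix.cons_val_three, Matrix.tail_cons, Matrix.head_fin_const]
  field_simp
  ring

lemma coeff_ne (c d : ℝ) (h : c ≠ 0 ∨ d ≠ 0) : 0 < c^2 + d^2 := by
  rcases h with h | h
  · have : 0 < c^2 := by positivity
    nlinarith [sq_nonneg d]
  · have : 0 < d^2 := by positivity
    nlinarith [sq_nonneg c]

/-- The type B metric has neutral signature (2,2) at every point, for every
real μ: there are a 2-dimensional subspace on which the form is positive
definite and a 2-dimensional subspace on which it is negative definite. -/
theorem typeB_signature (μ : ℝ) (p : Fin 4 → ℝ) :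
    ∃ P N : Submodule ℝ (Fin 4 → ℝ),
      Module.finrank ℝ P = 2 ∧ Module.finrank ℝ N = 2 ∧
      (∀ v ∈ P, v ≠ 0 → 0 < v ⬝ᵥ (gB μ p).mulVec v) ∧
      (∀ v ∈ N, v ≠ 0 → v ⬝ᵥ (gB μ p).mulVec v < 0) := by
  set a := exp (-p 0) with hadef
  set b := exp (-p 1) with hbdef
  have ha : a ≠ 0 := (exp_pos _).ne'
  have hb : b ≠ 0 := (exp_pos _).ne'
  have hgB : gB μ p = gB' μ a b := rfl
  refine ⟨Submodule.span ℝ {bvec 1 μ a b, bvec' 1 μ a b},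
          Submodule.span ℝ {bvec (-1) μ a b, bvec' (-1) μ a b},
          finrank_span_pair_eq_two (bvec_li 1 μ a b),
          finrank_span_pair_eq_two (bvec_li (-1) μ a b), ?_, ?_⟩
  · intro v hv hne
    obtain ⟨c, d, rfl⟩ := Submodule.mem_span_pair.mp hv
    have hcd : c ≠ 0 ∨ d ≠ 0 := by
      by_contra h
      push_neg at h
      obtain ⟨rfl, rfl⟩ := h
      simp at hne
    rw [hgB, eval_quad _ _ _ _ _ _ ha hb, one_mul]
    exact coeff_ne c d hcd
  · intro v hv hne
    obtain ⟨c, d, rfl⟩ := Submodule.mem_span_pair.mp hv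
    have hcd : c ≠ 0 ∨ d ≠ 0 := by
      by_contra h
      push_neg at h
      obtain ⟨rfl, rfl⟩ := h
      simp at hne
    rw [hgB, eval_quad _ _ _ _ _ _ ha hb]
    nlinarith [coeff_ne c d hcd]
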